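/- arXiv:1211.3350 — 9 statements merged into one kernel-verified Lean document; each statement's English description precedes it below -/
import Mathlib

section
/- The partial order of summable ideals under reverse inclusion is atomless: for every summable ideal I_a there exist summable ideals I_b, I_c both containing I_a such that I_b and I_c are incompatible, i.e., there is no summable ideal containing both I_b and I_c. -/
/-- `a ∈ c₀⁺ ∖ ℓ¹`: positive reals tending to `0` with divergent sum. -/
def C0Div (a : ℕ → ℝ) : Prop :=
  (∀ n, 0 < a n) ∧ Filter.Tendsto a Filter.atTop (nhds 0) ∧ ¬ Summable a

/-- The summable ideal determined by `a`. -/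
def sIdeal (a : ℕ → ℝ) : Set (Set ℕ) := {A | Summable (A.indicator a)}

open Filter Finset in
open Classical in
/-- greedy pair of partial sums: put each term on the currently smaller side -/
noncomputable def gp (a : ℕ → ℝ) : ℕ → ℝ × ℝ
  | 0 => (0, 0)
  | n + 1 =>
    if (gp a n).1 ≤ (gp a n).2 then ((gp a n).1 + a n, (gp a n).2)
    else ((gp a n).1, (gp a n).2 + a n)

def Aset (a : ℕ → ℝ) : Set ℕ := {n | (gp a n).1 ≤ (gp a n).2}

lemma gp_fst_sum (a : ℕ → ℝ) (N : ℕ) :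
    ∑ k ∈ Finset.range N, (Aset a).indicator a k = (gp a N).1 := by
  classical
  induction N with
  | zero => simp [gp]
  | succ n ih =>
    rw [Finset.sum_range_succ, ih, gp]
    by_cases h : (gp a n).1 ≤ (gp a n).2
    · rw [Set.indicator_of_mem (show n ∈ Aset a from h), if_pos h]
    · rw [Set.indicator_of_notMem (show n ∉ Aset a from h), if_neg h]; simp

lemma gp_snd_sum (a : ℕ → ℝ) (N : ℕ) :
    ∑ k ∈ Finset.range N, (Aset a)ᶜ.indicator a k = (gp a N).2 := by
  classical
  induction N with
  | zero => simp [gp]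
  | succ n ih =>
    rw [Finset.sum_range_succ, ih, gp]
    by_cases h : (gp a n).1 ≤ (gp a n).2
    · rw [Set.indicator_of_notMem (not_not_intro (show n ∈ Aset a from h)), if_pos h]; simp
    · rw [Set.indicator_of_mem (show n ∈ (Aset a)ᶜ from h), if_neg h]

lemma gp_add (a : ℕ → ℝ) (N : ℕ) :
    (gp a N).1 + (gp a N).2 = ∑ k ∈ Finset.range N, a k := by
  induction N with
  | zero => simp [gp]
  | succ n ih =>
    rw [Finset.sum_range_succ, ← ih, gp]
    by_cases h : (gp a n).1 ≤ (gp a n).2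
    · rw [if_pos h]; ring
    · rw [if_neg h]; ring

lemma gp_diff (a : ℕ → ℝ) (C : ℝ) (hC : 0 ≤ C) (hb : ∀ n, a n ≤ C)
    (hpos : ∀ n, 0 < a n) (N : ℕ) :
    (gp a N).1 - (gp a N).2 ≤ C ∧ (gp a N).2 - (gp a N).1 ≤ C := by
  induction N with
  | zero => simp [gp, hC]
  | succ n ih =>
    rw [gp]
    by_cases h : (gp a n).1 ≤ (gp a n).2
    · rw [if_pos h]
      constructor
      · simp only
        have := hb n
        linarith
      · simp only
        have := hpos n
        linarith [ih.2]
    · rw [if_neg h]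
      push_neg at h
      constructor
      · simp only
        have := hpos n
        linarith [ih.1]
      · simp only
        have := hb n
        linarith

lemma split_exists (a : ℕ → ℝ) (ha : C0Div a) :
    ∃ A : Set ℕ, ¬ Summable (A.indicator a) ∧ ¬ Summable (Aᶜ.indicator a) := by
  obtain ⟨hpos, htend, hns⟩ := ha
  obtain ⟨C, hC⟩ := htend.bddAbove_range
  rw [mem_upperBounds] at hC
  have hC' : ∀ n, a n ≤ C := fun n => hC _ ⟨n, rfl⟩
  have hC0 : 0 ≤ C := le_trans (hpos 0).le (hC' 0)
  have hs : Filter.Tendsto (fun N => ∑ k ∈ Finset.range N, a k) Filter.atTop Filter.atTop := by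
    by_contra h
    exact hns ((summable_iff_not_tendsto_nat_atTop_of_nonneg (fun n => (hpos n).le)).2 h)
  have haux : Filter.Tendsto (fun N => ((∑ k ∈ Finset.range N, a k) - C) / 2)
      Filter.atTop Filter.atTop := by
    apply Filter.Tendsto.atTop_div_const (by norm_num : (0:ℝ) < 2)
    exact Filter.tendsto_atTop_add_const_right _ (-C) hs
  refine ⟨Aset a, ?_, ?_⟩
  · intro h
    rw [summable_iff_not_tendsto_nat_atTop_of_nonneg
      (fun n => Set.indicator_nonneg (fun i _ => (hpos i).le) n)] at h
    apply h
    have heq : (fun N => ∑ k ∈ Finset.range N, (Aset a).indicator a k)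
        = fun N => (gp a N).1 := funext (gp_fst_sum a)
    rw [heq]
    apply Filter.tendsto_atTop_mono _ haux
    intro N
    have h1 := (gp_diff a C hC0 hC' hpos N).2
    have h2 := gp_add a N
    linarith
  · intro h
    rw [summable_iff_not_tendsto_nat_atTop_of_nonneg
      (fun n => Set.indicator_nonneg (fun i _ => (hpos i).le) n)] at h
    apply h
    have heq : (fun N => ∑ k ∈ Finset.range N, (Aset a)ᶜ.indicator a k)
        = fun N => (gp a N).2 := funext (gp_snd_sum a)
    rw [heq]
    apply Filter.tendsto_atTop_mono _ haux
    intro N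
    have h1 := (gp_diff a C hC0 hC' hpos N).1
    have h2 := gp_add a N
    linarith

open Classical in
lemma shrink (a : ℕ → ℝ) (A : Set ℕ) (ha : C0Div a)
    (hA : ¬ Summable (Aᶜ.indicator a)) :
    ∃ b : ℕ → ℝ, C0Div b ∧ sIdeal a ⊆ sIdeal b ∧ A ∈ sIdeal b := by
  obtain ⟨hpos, htend, _⟩ := ha
  set b : ℕ → ℝ := fun n => if n ∈ A then min (a n) ((1/2)^n) else a n with hb
  have hbpos : ∀ n, 0 < b n := by
    intro n
    simp only [hb]
    split
    · exact lt_min (hpos n) (by positivity)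
    · exact hpos n
  have hble : ∀ n, b n ≤ a n := by
    intro n
    simp only [hb]
    split
    · exact min_le_left _ _
    · exact le_rfl
  have hbc : ∀ n ∈ Aᶜ, b n = a n := by
    intro n hn
    simp only [hb, if_neg hn]
  refine ⟨b, ⟨hbpos, ?_, ?_⟩, ?_, ?_⟩
  · exact squeeze_zero (fun n => (hbpos n).le) hble htend
  · intro hsum
    apply hA
    have : Aᶜ.indicator a = Aᶜ.indicator b := by
      funext n
      by_cases hn : n ∈ Aᶜ
      · rw [Set.indicator_of_mem hn, Set.indicator_of_mem hn, hbc n hn]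
      · rw [Set.indicator_of_notMem hn, Set.indicator_of_notMem hn]
    rw [this]
    exact hsum.indicator _
  · intro S hS
    exact Summable.of_nonneg_of_le
      (fun n => Set.indicator_nonneg (fun i _ => (hbpos i).le) n)
      (fun n => Set.indicator_le_indicator (hble n)) hS
  · have hind : ∀ n, A.indicator b n ≤ (1/2 : ℝ)^n := by
      intro n
      by_cases hn : n ∈ A
      · rw [Set.indicator_of_mem hn]
        simp only [hb, if_pos hn]
        exact min_le_right _ _
      · rw [Set.indicator_of_notMem hn]
        positivity
    exact Summable.of_nonneg_of_le
      (fun n => Set.indicator_nonneg (fun i _ => (hbpos i).le) n)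
      hind summable_geometric_two

/-- The order of summable ideals under reverse inclusion is atomless. -/
theorem summable_ideals_atomless (a : ℕ → ℝ) (ha : C0Div a) :
    ∃ b c : ℕ → ℝ, C0Div b ∧ C0Div c ∧
      sIdeal a ⊆ sIdeal b ∧ sIdeal a ⊆ sIdeal c ∧
      ¬ ∃ d : ℕ → ℝ, C0Div d ∧ sIdeal b ⊆ sIdeal d ∧ sIdeal c ⊆ sIdeal d := by
  obtain ⟨A, hA1, hA2⟩ := split_exists a ha
  obtain ⟨b, hb, hab, hAb⟩ := shrink a A ha hA2
  obtain ⟨c, hc, hac, hAc⟩ := shrink a Aᶜ ha (by rwa [compl_compl])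
  refine ⟨b, c, hb, hc, hab, hac, ?_⟩
  rintro ⟨d, hd, hbd, hcd⟩
  have h1 : Summable (A.indicator d) := hbd hAb
  have h2 : Summable (Aᶜ.indicator d) := hcd hAc
  apply hd.2.2
  have : d = fun n => A.indicator d n + Aᶜ.indicator d n := by
    funext n
    by_cases hn : n ∈ A
    · rw [Set.indicator_of_mem hn, Set.indicator_of_notMem (not_not_intro hn)]; ring
    · rw [Set.indicator_of_notMem hn, Set.indicator_of_mem (Set.mem_compl hn)]; ring
  rw [this]
  exact h1.add h2
end

section
/- The partial order of summable ideals under reverse inclusion is σ-closed: for every countable increasing (under inclusion) chain I_{a_0} ⊆ I_{a_1} ⊆ ⋯ of summable ideals there exists a summable ideal I_a with I_{a_j} ⊆ I_a for all j. -/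
open Filter Set Finset

noncomputable def dseq (a : ℕ → ℕ → ℝ) : ℕ → ℕ → ℝ
  | 0 => a 0
  | k + 1 => fun n => min (dseq a k n) (a (k + 1) n)

lemma dseq_pos (a : ℕ → ℕ → ℝ) (ha : ∀ j n, 0 < a j n) (k n : ℕ) : 0 < dseq a k n := by
  induction k with
  | zero => exact ha 0 n
  | succ k ih => exact lt_min ih (ha (k+1) n)

lemma dseq_le (a : ℕ → ℕ → ℝ) (k n : ℕ) : dseq a k n ≤ a k n := by
  cases k with
  | zero => exact le_rfl
  | succ k => exact min_le_right _ _

lemma dseq_succ_le (a : ℕ → ℕ → ℝ) (k n : ℕ) : dseq a (k+1) n ≤ dseq a k n :=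
  min_le_left _ _

lemma dseq_anti (a : ℕ → ℕ → ℝ) (n : ℕ) : Antitone (fun k => dseq a k n) :=
  antitone_nat_of_succ_le (fun k => dseq_succ_le a k n)

lemma indicator_summable_mono {c e : ℕ → ℝ} {A B : Set ℕ}
    (hc : ∀ n, 0 ≤ c n) (he0 : ∀ n, 0 ≤ e n) (hAB : A ⊆ B) (h : ∀ n, n ∈ A → c n ≤ e n)
    (he : Summable (B.indicator e)) : Summable (A.indicator c) := by
  apply he.of_nonneg_of_le (fun n => indicator_nonneg (fun i _ => hc i) n)
  intro n
  by_cases hn : n ∈ A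
  · rw [indicator_of_mem hn, indicator_of_mem (hAB hn)]
    exact h n hn
  · rw [indicator_of_notMem hn]
    exact indicator_nonneg (fun i _ => he0 i) n

lemma sIdeal_dseq (a : ℕ → ℕ → ℝ) (ha : ∀ j, C0Div (a j))
    (hchain : ∀ j, sIdeal (a j) ⊆ sIdeal (a (j + 1))) (k : ℕ) :
    sIdeal (dseq a k) = sIdeal (a k) := by
  have hpos : ∀ j n, 0 < a j n := fun j => (ha j).1
  induction k with
  | zero => rfl
  | succ k ih =>
    ext A
    constructor
    · intro hA
      -- hA : Summable (A.indicator (dseq a (k+1)))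
      set B : Set ℕ := {n | n ∈ A ∧ dseq a k n ≤ a (k+1) n} with hBdef
      set C : Set ℕ := {n | n ∈ A ∧ a (k+1) n < dseq a k n} with hCdef
      have hBA : B ⊆ A := fun n hn => hn.1
      have hCA : C ⊆ A := fun n hn => hn.1
      have hBsum : Summable (B.indicator (dseq a k)) := by
        apply indicator_summable_mono (fun n => (dseq_pos a hpos k n).le)
          (fun n => (dseq_pos a hpos (k+1) n).le) hBA _ hA
        intro n hn
        show dseq a k n ≤ min (dseq a k n) (a (k+1) n)
        exact le_min le_rfl hn.2
      have hB : B ∈ sIdeal (a (k+1)) := hchain k (ih ▸ hBsum)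
      have hCsum : Summable (C.indicator (a (k+1))) := by
        apply indicator_summable_mono (fun n => (hpos (k+1) n).le)
          (fun n => (dseq_pos a hpos (k+1) n).le) hCA _ hA
        intro n hn
        show a (k+1) n ≤ min (dseq a k n) (a (k+1) n)
        exact le_min hn.2.le le_rfl
      show Summable (A.indicator (a (k+1)))
      refine Summable.of_nonneg_of_le
        (fun n => indicator_nonneg (fun i _ => (hpos (k+1) i).le) n)
        (fun n => ?_) (hB.add hCsum)
      by_cases hn : n ∈ A
      · rw [indicator_of_mem hn]
        rcases le_or_gt (dseq a k n) (a (k+1) n) with h | h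
        · have : n ∈ B := ⟨hn, h⟩
          rw [indicator_of_mem this]
          have : 0 ≤ C.indicator (a (k+1)) n :=
            indicator_nonneg (fun i _ => (hpos (k+1) i).le) n
          linarith
        · have : n ∈ C := ⟨hn, h⟩
          rw [indicator_of_mem this]
          have : 0 ≤ B.indicator (a (k+1)) n :=
            indicator_nonneg (fun i _ => (hpos (k+1) i).le) n
          linarith
      · rw [indicator_of_notMem hn]
        have h1 : 0 ≤ B.indicator (a (k+1)) n :=
          indicator_nonneg (fun i _ => (hpos (k+1) i).le) n
        have h2 : 0 ≤ C.indicator (a (k+1)) n :=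
          indicator_nonneg (fun i _ => (hpos (k+1) i).le) n
        linarith
    · intro hA
      exact indicator_summable_mono (fun n => (dseq_pos a hpos (k+1) n).le)
        (fun n => (hpos (k+1) n).le) (subset_refl A)
        (fun n _ => dseq_le a (k+1) n) hA

lemma dseq_not_summable (a : ℕ → ℕ → ℝ) (ha : ∀ j, C0Div (a j))
    (hchain : ∀ j, sIdeal (a j) ⊆ sIdeal (a (j + 1))) (k : ℕ) :
    ¬ Summable (dseq a k) := by
  intro h
  have : (Set.univ : Set ℕ) ∈ sIdeal (dseq a k) := by
    show Summable (Set.univ.indicator (dseq a k))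
    rwa [Set.indicator_univ]
  rw [sIdeal_dseq a ha hchain k] at this
  have h2 : Summable (Set.univ.indicator (a k)) := this
  rw [Set.indicator_univ] at h2
  exact (ha k).2.2 h2

/-- The order of summable ideals under reverse inclusion is σ-closed: every countable
increasing chain of summable ideals is contained in a single summable ideal. -/
theorem summable_ideals_sigma_closed (a : ℕ → ℕ → ℝ) (ha : ∀ j, C0Div (a j))
    (hchain : ∀ j, sIdeal (a j) ⊆ sIdeal (a (j + 1))) :
    ∃ b : ℕ → ℝ, C0Div b ∧ ∀ j, sIdeal (a j) ⊆ sIdeal b := by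
  have hpos : ∀ j n, 0 < a j n := fun j => (ha j).1
  have hdpos : ∀ k n, 0 < dseq a k n := dseq_pos a hpos
  -- blocks with sum ≥ 1
  have hex : ∀ k m, ∃ M, m < M ∧ 1 ≤ ∑ n ∈ Finset.Ico m M, dseq a k n := by
    intro k m
    have hns := dseq_not_summable a ha hchain k
    have htop : Tendsto (fun M => ∑ n ∈ Finset.range M, dseq a k n) atTop atTop :=
      (not_summable_iff_tendsto_nat_atTop_of_nonneg (fun n => (hdpos k n).le)).mp hns
    obtain ⟨M, hM⟩ := ((htop.eventually_ge_atTop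
      ((∑ n ∈ Finset.range m, dseq a k n) + 1)).and (eventually_ge_atTop (m + 1))).exists
    refine ⟨M, hM.2, ?_⟩
    rw [Finset.sum_Ico_eq_sub _ (le_of_lt hM.2)]
    linarith [hM.1]
  choose F hF1 hF2 using hex
  set N : ℕ → ℕ := fun k => Nat.rec 0 (fun k Nk => F k Nk) k with hNdef
  have hNsucc : ∀ k, N (k + 1) = F k (N k) := fun k => rfl
  have hNlt : ∀ k, N k < N (k + 1) := fun k => hF1 k (N k)
  have hNmono : StrictMono N := strictMono_nat_of_lt_succ hNlt
  have hNle : ∀ k, k ≤ N k := fun k => hNmono.le_apply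
  set idx : ℕ → ℕ := fun n => Nat.findGreatest (fun k => N k ≤ n) n with hidxdef
  set b : ℕ → ℝ := fun n => dseq a (idx n) n with hbdef
  have hidxge : ∀ j n, N j ≤ n → j ≤ idx n :=
    fun j n h => Nat.le_findGreatest ((hNle j).trans h) h
  have hidxspec : ∀ n, N (idx n) ≤ n := by
    intro n
    exact Nat.findGreatest_spec (P := fun k => N k ≤ n) (Nat.zero_le n) (Nat.zero_le n)
  have hidx_block : ∀ k n, N k ≤ n → n < N (k + 1) → idx n = k := by
    intro k n h1 h2
    refine le_antisymm ?_ (hidxge k n h1)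
    by_contra hc
    push_neg at hc
    have : N (k + 1) ≤ N (idx n) := hNmono.monotone hc
    exact absurd ((this.trans (hidxspec n))) (not_le.mpr h2)
  have hbpos : ∀ n, 0 < b n := fun n => hdpos (idx n) n
  have hble : ∀ n, b n ≤ a 0 n := fun n => dseq_anti a n (Nat.zero_le (idx n))
  refine ⟨b, ⟨hbpos, ?_, ?_⟩, ?_⟩
  · -- tendsto 0
    exact squeeze_zero (fun n => (hbpos n).le) hble (ha 0).2.1
  · -- not summable
    intro hb
    have hT : Tendsto (fun M => ∑ i ∈ Finset.range M, b i) atTop (nhds (∑' i, b i)) :=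
      hb.hasSum.tendsto_sum_nat
    have h1 : Tendsto (fun k => ∑ i ∈ Finset.range (N (k + 1)), b i) atTop (nhds (∑' i, b i)) :=
      hT.comp (hNmono.tendsto_atTop.comp (tendsto_add_atTop_nat 1))
    have h2 : Tendsto (fun k => ∑ i ∈ Finset.range (N k), b i) atTop (nhds (∑' i, b i)) :=
      hT.comp hNmono.tendsto_atTop
    have hdiff : Tendsto
        (fun k => (∑ i ∈ Finset.range (N (k + 1)), b i) - ∑ i ∈ Finset.range (N k), b i)
        atTop (nhds 0) := by
      simpa using h1.sub h2
    have hge : ∀ k, (1 : ℝ) ≤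
        (∑ i ∈ Finset.range (N (k + 1)), b i) - ∑ i ∈ Finset.range (N k), b i := by
      intro k
      rw [← Finset.sum_Ico_eq_sub _ (hNlt k).le]
      have heq : ∑ n ∈ Finset.Ico (N k) (N (k + 1)), b n
          = ∑ n ∈ Finset.Ico (N k) (N (k + 1)), dseq a k n := by
        refine Finset.sum_congr rfl (fun n hn => ?_)
        rw [Finset.mem_Ico] at hn
        show dseq a (idx n) n = dseq a k n
        rw [hidx_block k n hn.1 hn.2]
      rw [heq]
      have := hF2 k (N k)
      rwa [← hNsucc k] at this
    have : (1 : ℝ) ≤ 0 := ge_of_tendsto hdiff (Filter.Eventually.of_forall hge)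
    linarith
  · -- containment
    intro j A hA
    have hA' : Summable (A.indicator (dseq a j)) := by
      have : A ∈ sIdeal (dseq a j) := by rw [sIdeal_dseq a ha hchain j]; exact hA
      exact this
    show Summable (A.indicator b)
    rw [← summable_nat_add_iff (N j)]
    refine Summable.of_nonneg_of_le
      (fun n => indicator_nonneg (fun i _ => (hbpos i).le) _)
      (fun n => ?_)
      ((summable_nat_add_iff (N j)).mpr hA')
    by_cases hn : n + N j ∈ A
    · rw [indicator_of_mem hn, indicator_of_mem hn]
      exact dseq_anti a (n + N j) (hidxge j (n + N j) (Nat.le_add_left _ _))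
    · rw [indicator_of_notMem hn]
      exact indicator_nonneg (fun i _ => (hdpos j i).le) _
end

section
/- The partial order of summable ideals under reverse inclusion is separative: if I_a and I_b are summable ideals with I_b ⊄̸ I_a (i.e., I_a does not contain I_b, equivalently there is B ∈ I_b with B ∉ I_a), then there exists a summable ideal I_c ⊇ I_a such that I_c and I_b are incompatible (no summable ideal contains both I_c and I_b). -/
/-- The order of summable ideals under reverse inclusion is separative. -/
theorem summable_ideals_separative (a b : ℕ → ℝ) (ha : C0Div a) (hb : C0Div b)
    (h : ¬ sIdeal b ⊆ sIdeal a) :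
    ∃ c : ℕ → ℝ, C0Div c ∧ sIdeal a ⊆ sIdeal c ∧
      ¬ ∃ d : ℕ → ℝ, C0Div d ∧ sIdeal c ⊆ sIdeal d ∧ sIdeal b ⊆ sIdeal d := by
  -- extract a witness B with B ∈ sIdeal b, B ∉ sIdeal a
  classical
  rw [Set.not_subset] at h
  obtain ⟨B, hBb, hBa⟩ := h
  set c : ℕ → ℝ := fun n => if n ∈ B then a n else min (a n) ((1/2 : ℝ)^n) with hc
  have hcpos : ∀ n, 0 < c n := by
    intro n
    simp only [hc]
    split
    · exact ha.1 n
    · exact lt_min (ha.1 n) (by positivity)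
  have hcle : ∀ n, c n ≤ a n := by
    intro n
    simp only [hc]
    split
    · exact le_rfl
    · exact min_le_left _ _
  have hc0 : Filter.Tendsto c Filter.atTop (nhds 0) := by
    apply tendsto_of_tendsto_of_tendsto_of_le_of_le tendsto_const_nhds ha.2.1
    · exact fun n => (hcpos n).le
    · exact hcle
  have hindB : B.indicator c = B.indicator a := by
    apply Set.indicator_congr
    intro n hn
    simp [hc, hn]
  have hcns : ¬ Summable c := by
    intro hs
    exact hBa (by simpa [sIdeal, hindB] using hs.indicator B)
  have hcompl : Summable (Bᶜ.indicator c) := by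
    refine Summable.of_nonneg_of_le
      (fun n => Set.indicator_nonneg (fun m _ => (hcpos m).le) n) ?_
      (summable_geometric_of_lt_one (by norm_num) (by norm_num) (r := (1/2 : ℝ)))
    intro n
    by_cases hn : n ∈ Bᶜ
    · rw [Set.indicator_of_mem hn]
      simp only [hc]
      rw [if_neg hn]
      exact min_le_right _ _
    · rw [Set.indicator_of_notMem hn]
      positivity
  refine ⟨c, ⟨hcpos, hc0, hcns⟩, ?_, ?_⟩
  · intro A hA
    have hA' : Summable (A.indicator a) := hA
    refine Summable.of_nonneg_of_le
      (fun n => Set.indicator_nonneg (fun m _ => (hcpos m).le) n) ?_ hA'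
    intro n
    by_cases hn : n ∈ A
    · rw [Set.indicator_of_mem hn, Set.indicator_of_mem hn]; exact hcle n
    · rw [Set.indicator_of_notMem hn, Set.indicator_of_notMem hn]
  · rintro ⟨d, hd, hcd, hbd⟩
    have h1 : Summable (B.indicator d) := hbd hBb
    have h2 : Summable (Bᶜ.indicator d) := hcd hcompl
    have : Summable d := by
      rw [← Set.indicator_self_add_compl B d]
      exact h1.add h2
    exact hd.2.2 this
end

section
/- The tower number of (c₀⁺ ∖ ℓ¹, ≤*) is at most 𝔟: there exists a ≤*-decreasing chain in c₀⁺ ∖ ℓ¹ of length 𝔟 (indexed by an unbounded ≤*-increasing family of functions ω → ω of size 𝔟) which has no lower bound in c₀⁺ ∖ ℓ¹. -/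
/-- `g ≤* f`: eventual domination of real sequences. -/
def leStar (g f : ℕ → ℝ) : Prop := ∀ᶠ n in Filter.atTop, g n ≤ f n

open Filter

/-- auxiliary sequence: odd coordinates are harmonic, even coordinates encode `b`. -/
noncomputable def towerSeq (b : ℕ → ℕ) (n : ℕ) : ℝ :=
  if n % 2 = 0 then min ((2:ℝ)⁻¹ ^ b (n/2)) (((n/2 + 1 : ℕ) : ℝ))⁻¹
  else (((n/2 + 1 : ℕ) : ℝ))⁻¹

lemma towerSeq_pos (b : ℕ → ℕ) (n : ℕ) : 0 < towerSeq b n := by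
  unfold towerSeq
  have h1 : (0:ℝ) < (((n/2 + 1 : ℕ) : ℝ))⁻¹ := by positivity
  have h2 : (0:ℝ) < (2:ℝ)⁻¹ ^ b (n/2) := by positivity
  split
  · exact lt_min h2 h1
  · exact h1

lemma towerSeq_le (b : ℕ → ℕ) (n : ℕ) : towerSeq b n ≤ (((n/2 + 1 : ℕ) : ℝ))⁻¹ := by
  unfold towerSeq
  split
  · exact min_le_right _ _
  · exact le_rfl

lemma towerSeq_odd (b : ℕ → ℕ) (k : ℕ) : towerSeq b (2*k+1) = (((k + 1 : ℕ) : ℝ))⁻¹ := by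
  have h1 : (2*k+1) % 2 = 1 := by omega
  have h2 : (2*k+1) / 2 = k := by omega
  simp [towerSeq, h1, h2]

lemma towerSeq_even_le (b : ℕ → ℕ) (k : ℕ) : towerSeq b (2*k) ≤ (2:ℝ)⁻¹ ^ b k := by
  have h1 : (2*k) % 2 = 0 := by omega
  have h2 : (2*k) / 2 = k := by omega
  simp [towerSeq, h1, h2]

lemma towerSeq_c0div (b : ℕ → ℕ) : C0Div (towerSeq b) := by
  refine ⟨towerSeq_pos b, ?_, ?_⟩
  · -- tends to 0, squeeze
    have hdiv : Filter.Tendsto (fun n : ℕ => n/2 + 1) atTop atTop := by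
      apply Filter.tendsto_atTop.mpr
      intro m
      filter_upwards [Filter.eventually_ge_atTop (2*m)] with n hn
      omega
    have hB : Filter.Tendsto (fun n : ℕ => (((n/2 + 1 : ℕ) : ℝ))⁻¹) atTop (nhds 0) :=
      tendsto_inv_atTop_zero.comp (tendsto_natCast_atTop_atTop.comp hdiv)
    exact tendsto_of_tendsto_of_tendsto_of_le_of_le tendsto_const_nhds hB
      (fun n => (towerSeq_pos b n).le) (fun n => towerSeq_le b n)
  · -- not summable
    intro hs
    have hinj : Function.Injective (fun k : ℕ => 2*k+1) := fun x y h => by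
      simp only at h; omega
    have hodd : Summable ((towerSeq b) ∘ fun k : ℕ => 2*k+1) := hs.comp_injective hinj
    have heq : ((towerSeq b) ∘ fun k : ℕ => 2*k+1) = fun k : ℕ => (((k + 1 : ℕ) : ℝ))⁻¹ := by
      funext k; exact towerSeq_odd b k
    rw [heq] at hodd
    have : Summable (fun k : ℕ => ((k : ℝ))⁻¹) := by
      rw [← summable_nat_add_iff 1]
      exact hodd
    exact Real.not_summable_natCast_inv this

/-- Given an unbounded ≤*-increasing family of functions `ω → ω` (e.g. one of size 𝔟),
there is a ≤*-decreasing chain in `c₀⁺ ∖ ℓ¹` indexed by it with no lower bound;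
hence 𝔱(c₀⁺ ∖ ℓ¹) ≤ 𝔟. -/
theorem tower_number_le_b (ι : Type) [LinearOrder ι] (b : ι → ℕ → ℕ)
    (hmono : ∀ i j, i < j → ∀ᶠ n in Filter.atTop, b i n ≤ b j n)
    (hunbounded : ¬ ∃ g : ℕ → ℕ, ∀ i, ∀ᶠ n in Filter.atTop, b i n ≤ g n) :
    ∃ a : ι → ℕ → ℝ, (∀ i, C0Div (a i)) ∧
      (∀ i j, i < j → leStar (a j) (a i)) ∧
      ¬ ∃ c : ℕ → ℝ, C0Div c ∧ ∀ i, leStar c (a i) := by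
  classical
  refine ⟨fun i => towerSeq (b i), fun i => towerSeq_c0div (b i), ?_, ?_⟩
  · -- decreasing chain
    intro i j hij
    obtain ⟨N, hN⟩ := Filter.eventually_atTop.mp (hmono i j hij)
    refine Filter.eventually_atTop.mpr ⟨2*N, fun n hn => ?_⟩
    have hb : b i (n/2) ≤ b j (n/2) := hN _ (by omega)
    show towerSeq (b j) n ≤ towerSeq (b i) n
    unfold towerSeq
    split
    · exact min_le_min (pow_le_pow_of_le_one (by norm_num) (by norm_num) hb) le_rfl
    · exact le_rfl
  · -- no lower bound
    rintro ⟨c, ⟨hcpos, -, -⟩, hcle⟩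
    apply hunbounded
    have hex : ∀ k : ℕ, ∃ m : ℕ, (2:ℝ)⁻¹ ^ m < c (2*k) := fun k =>
      exists_pow_lt_of_lt_one (hcpos (2*k)) (by norm_num)
    refine ⟨fun k => Nat.find (hex k), fun i => ?_⟩
    obtain ⟨N, hN⟩ := Filter.eventually_atTop.mp (hcle i)
    refine Filter.eventually_atTop.mpr ⟨N, fun k hk => ?_⟩
    by_contra hgb
    push_neg at hgb
    have h1 : c (2*k) ≤ towerSeq (b i) (2*k) := hN _ (by omega)
    have h2 : towerSeq (b i) (2*k) ≤ (2:ℝ)⁻¹ ^ b i k := towerSeq_even_le (b i) k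
    have h3 : (2:ℝ)⁻¹ ^ Nat.find (hex k) < c (2*k) := Nat.find_spec (hex k)
    have h4 : (2:ℝ)⁻¹ ^ b i k ≤ (2:ℝ)⁻¹ ^ Nat.find (hex k) :=
      pow_le_pow_of_le_one (by norm_num) (by norm_num) (by omega)
    linarith
end

section
/- The map sending a sequence a ∈ c₀⁺ ∖ ℓ¹ to its summable ideal I_a = {A ⊆ ℕ : ∑_{n∈A} aₙ < ∞} is an order homomorphism from (c₀⁺ ∖ ℓ¹, ≤*) onto the summable ideals ordered by reverse inclusion: if a ≤* b then I_b ⊆ I_a; moreover a and b are incompatible in (c₀⁺∖ℓ¹,≤*) (no common ≤*-lower bound in c₀⁺∖ℓ¹) if and only if I_a and I_b are incompatible among summable ideals. -/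
lemma mono_aux (a b : ℕ → ℝ) (ha : C0Div a) (hb : C0Div b) (hab : leStar a b) :
    sIdeal b ⊆ sIdeal a := by
  intro A hA
  obtain ⟨N, hN⟩ := Filter.eventually_atTop.mp hab
  simp only [sIdeal, Set.mem_setOf_eq] at hA ⊢
  rw [← summable_nat_add_iff N] at hA ⊢
  refine Summable.of_nonneg_of_le
    (fun n => Set.indicator_nonneg (fun i _ => (ha.1 i).le) _) (fun n => ?_) hA
  by_cases h : n + N ∈ A
  · simpa [Set.indicator_of_mem h] using hN _ (Nat.le_add_left N n)
  · simp [Set.indicator_of_notMem h]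
/-- The map `a ↦ I_a` is an order homomorphism from `(c₀⁺ ∖ ℓ¹, ≤*)` to the summable
ideals under reverse inclusion, preserving and reflecting incompatibility. -/
theorem summable_ideal_map_order_hom :
    (∀ a b : ℕ → ℝ, C0Div a → C0Div b → leStar a b → sIdeal b ⊆ sIdeal a) ∧
    (∀ a b : ℕ → ℝ, C0Div a → C0Div b →
      ((¬ ∃ c : ℕ → ℝ, C0Div c ∧ leStar c a ∧ leStar c b) ↔
        ¬ ∃ d : ℕ → ℝ, C0Div d ∧ sIdeal a ⊆ sIdeal d ∧ sIdeal b ⊆ sIdeal d)) := by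
  refine ⟨mono_aux, fun a b ha hb => not_congr ⟨?_, ?_⟩⟩
  · rintro ⟨c, hc, hca, hcb⟩
    exact ⟨c, hc, mono_aux c a hc ha hca, mono_aux c b hc hb hcb⟩
  · rintro ⟨d, hd, hda, hdb⟩
    set c : ℕ → ℝ := fun n => min (a n) (b n) with hcdef
    have hcsum : ¬ Summable c := by
      intro hs
      set A : Set ℕ := {n | a n ≤ b n} with hAdef
      have hA : A ∈ sIdeal a := by
        refine Summable.of_nonneg_of_le
          (fun n => Set.indicator_nonneg (fun i _ => (ha.1 i).le) _) (fun n => ?_) hs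
        by_cases h : n ∈ A
        · simp [Set.indicator_of_mem h, hcdef, le_min_iff, h.out]
        · simp only [Set.indicator_of_notMem h, hcdef]
          exact le_min (ha.1 n).le (hb.1 n).le
      have hB : Aᶜ ∈ sIdeal b := by
        refine Summable.of_nonneg_of_le
          (fun n => Set.indicator_nonneg (fun i _ => (hb.1 i).le) _) (fun n => ?_) hs
        by_cases h : n ∈ Aᶜ
        · have : b n ≤ a n := le_of_not_ge h
          simp [Set.indicator_of_mem h, hcdef, le_min_iff, this]
        · simp only [Set.indicator_of_notMem h, hcdef]
          exact le_min (ha.1 n).le (hb.1 n).le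
      have hsd : Summable d := by
        have := (hda hA).add (hdb hB)
        simpa [Set.indicator_self_add_compl A d] using this
      exact hd.2.2 hsd
    refine ⟨c, ⟨fun n => lt_min (ha.1 n) (hb.1 n), by
        simpa using ha.2.1.min hb.2.1, hcsum⟩,
      Filter.Eventually.of_forall fun n => min_le_left _ _,
      Filter.Eventually.of_forall fun n => min_le_right _ _⟩
end

section
/- An ultrapower of a Boolean algebra by a nonprincipal ultrafilter on ω is σ-closed as a forcing notion: for every nonprincipal ultrafilter U on ω and every Boolean algebra B, every countable decreasing sequence of nonzero elements of the quotient B^ω / U (where f ~ g iff {n : f(n) = g(n)} ∈ U, ordered by [f] ≤ [g] iff {n : f(n) ≤ g(n)} ∈ U) has a nonzero lower bound. -/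
/-- The ultrapower of a Boolean algebra `B` by a nonprincipal ultrafilter `U` on ω is
σ-closed: any countable decreasing (mod `U`) sequence of nonzero (mod `U`) elements of
`B^ω/U` has a nonzero lower bound. Stated on representatives. -/
theorem ultrapower_sigma_closed (B : Type*) [BooleanAlgebra B]
    (U : Ultrafilter ℕ) (hU : Filter.cofinite ≤ (U : Filter ℕ))
    (f : ℕ → ℕ → B)
    (hpos : ∀ k, {n | f k n ≠ ⊥} ∈ U)
    (hdec : ∀ k, {n | f (k + 1) n ≤ f k n} ∈ U) :
    ∃ g : ℕ → B, {n | g n ≠ ⊥} ∈ U ∧ ∀ k, {n | g n ≤ f k n} ∈ U := by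
  classical
  -- S k : the set of coordinates where the sequence behaves well up to stage k
  set S : ℕ → Set ℕ := fun k => {n | f k n ≠ ⊥ ∧ ∀ j < k, f (j + 1) n ≤ f j n} with hSdef
  have hchain : ∀ k n, n ∈ S k → ∀ j ≤ k, f k n ≤ f j n := by
    intro k n hn j hj
    have key : ∀ i, j + i ≤ k → f (j + i) n ≤ f j n := by
      intro i
      induction i with
      | zero => simp
      | succ i ih =>
        intro h
        have h1 : f (j + (i + 1)) n ≤ f (j + i) n := by
          simpa [← Nat.add_assoc] using hn.2 (j + i) (by omega)
        exact le_trans h1 (ih (by omega))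
    obtain ⟨i, rfl⟩ := Nat.exists_eq_add_of_le hj
    exact key i le_rfl
  have hS : ∀ k, S k ∈ U := by
    intro k
    have h1 : {n | ∀ j < k, f (j + 1) n ≤ f j n} ∈ U := by
      induction k with
      | zero =>
        have he : {n : ℕ | ∀ j < 0, f (j + 1) n ≤ f j n} = Set.univ := by
          ext n; simp
        rw [he]; exact Filter.univ_mem
      | succ k ih =>
        filter_upwards [ih, hdec k] with n h1 h2 j hj
        rcases Nat.lt_succ_iff_lt_or_eq.mp hj with h | h
        · exact h1 j h
        · subst h; exact h2
    filter_upwards [hpos k, h1] with n h2 h3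
    exact ⟨h2, h3⟩
  -- at coordinate n, take the infimum realized at the greatest good stage ≤ n
  set m : ℕ → ℕ := fun n => Nat.findGreatest (fun k => n ∈ S k) n with hmdef
  refine ⟨fun n => f (m n) n, ?_, ?_⟩
  · filter_upwards [hS 0] with n h0
    have hmn : n ∈ S (m n) :=
      Nat.findGreatest_spec (P := fun k => n ∈ S k) (Nat.zero_le n) h0
    exact hmn.1
  · intro k
    have hk : {n | k ≤ n} ∈ U := by
      have heq : {n : ℕ | k ≤ n} = Set.Ici k := rfl
      rw [heq]
      by_contra h
      have h2 : (Set.Ici k)ᶜ ∈ U := Ultrafilter.compl_mem_iff_notMem.mpr h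
      have h3 := hU h2
      rw [Filter.mem_cofinite, compl_compl] at h3
      exact Set.Ici_infinite k h3
    filter_upwards [hS k, hk] with n hnk hkn
    have hle : k ≤ m n := Nat.le_findGreatest (P := fun k => n ∈ S k) hkn hnk
    have hmn : n ∈ S (m n) :=
      Nat.findGreatest_spec (P := fun k => n ∈ S k) (le_trans hle (Nat.findGreatest_le n)) hnk
    exact hchain (m n) n hmn k hle
end

section
/- Let B be a Boolean algebra and J an ideal on ω. If P(ω)/J has an atom [A] (A ∉ J and every subset of A is, modulo J, either in J or equal to A) and B has an atom b, then the element [f] of B^ω/I_J defined by f(n) = b for n ∈ A and f(n) = 0 otherwise, is an atom of B^ω/I_J. Conversely, if P(ω)/J is atomless, or if B is atomless, then B^ω/I_J is atomless. -/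
/-- An ideal on ω: contains all finite sets, downward closed, closed under unions. -/
def IsIdeal (I : Set (Set ℕ)) : Prop :=
  (∀ X : Set ℕ, X.Finite → X ∈ I) ∧
  (∀ X Y : Set ℕ, X ⊆ Y → Y ∈ I → X ∈ I) ∧
  (∀ X Y : Set ℕ, X ∈ I → Y ∈ I → X ∪ Y ∈ I)

/-- `[f]` is an atom of the quotient `B^ω/I_J`: it is nonzero, and every element below
it (mod `I_J`) is zero or equal to it (mod `I_J`). -/
def QAtom (B : Type*) [BooleanAlgebra B] (J : Set (Set ℕ)) (f : ℕ → B) : Prop :=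
  {n | f n ≠ ⊥} ∉ J ∧
  ∀ g : ℕ → B, {n | g n \ f n ≠ ⊥} ∈ J →
    ({n | g n ≠ ⊥} ∈ J ∨ {n | f n \ g n ≠ ⊥} ∈ J)

open Classical in
/-- If `P(ω)/J` has an atom `[A]` and `B` has an atom `b` then the sequence equal to `b`
on `A` and `0` elsewhere is an atom of `B^ω/I_J`; conversely if `P(ω)/J` or `B` is
atomless then `B^ω/I_J` is atomless. -/
theorem quotient_product_atoms (B : Type*) [BooleanAlgebra B]
    (J : Set (Set ℕ)) (hJ : IsIdeal J) :
    (∀ (A : Set ℕ) (b : B), A ∉ J → (∀ S ⊆ A, S ∈ J ∨ A \ S ∈ J) → IsAtom b →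
      QAtom B J (fun n => if n ∈ A then b else ⊥)) ∧
    ((∀ A : Set ℕ, A ∉ J → ∃ S ⊆ A, S ∉ J ∧ A \ S ∉ J) →
      ∀ f : ℕ → B, ¬ QAtom B J f) ∧
    ((∀ b : B, ¬ IsAtom b) → ∀ f : ℕ → B, ¬ QAtom B J f) := by
  obtain ⟨hfin, hdown, hunion⟩ := hJ
  refine ⟨?_, ?_, ?_⟩
  · intro A b hA hAatom hb
    constructor
    · intro h
      apply hA
      apply hdown _ _ _ h
      intro n hn
      simp [hn, hb.1]
    · intro g hg
      set S : Set ℕ := {n | n ∈ A ∧ g n = b} with hS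
      rcases hAatom S (fun n hn => hn.1) with hSJ | hSJ
      · left
        apply hdown _ ({n | g n \ (if n ∈ A then b else ⊥) ≠ ⊥} ∪ S) _ (hunion _ _ hg hSJ)
        intro n hn
        by_cases hD : g n \ (if n ∈ A then b else ⊥) ≠ ⊥
        · exact Or.inl hD
        · right
          push_neg at hD
          rw [sdiff_eq_bot_iff] at hD
          by_cases hnA : n ∈ A
          · simp only [hnA, if_true] at hD
            rcases hb.le_iff.1 hD with h0 | h0
            · exact absurd h0 hn
            · exact ⟨hnA, h0⟩
          · simp only [hnA, if_false, le_bot_iff] at hD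
            exact absurd hD hn
      · right
        apply hdown _ _ _ hSJ
        intro n hn
        simp only [Set.mem_setOf_eq] at hn
        by_cases hnA : n ∈ A
        · refine ⟨hnA, fun hgb => ?_⟩
          apply hn
          rw [sdiff_eq_bot_iff]
          simp [hnA, hgb.2]
        · exact absurd (by simp [hnA]) hn
  · intro hatomless f ⟨hf, hmin⟩
    obtain ⟨S, hSA, hSJ, hASJ⟩ := hatomless _ hf
    set g : ℕ → B := fun n => if n ∈ S then f n else ⊥ with hg
    have h1 : {n | g n \ f n ≠ ⊥} ∈ J := by
      apply hdown _ _ _ (hfin ∅ Set.finite_empty)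
      intro n hn
      exfalso; apply hn
      rw [sdiff_eq_bot_iff]
      by_cases hnS : n ∈ S <;> simp [hg, hnS]
    rcases hmin g h1 with h | h
    · apply hSJ
      apply hdown _ _ _ h
      intro n hn
      simpa [hg, hn] using (hSA hn : n ∈ {m | f m ≠ ⊥})
    · apply hASJ
      apply hdown _ _ _ h
      intro n hn
      simpa [hg, hn.2] using hn.1
  · intro hatomless f ⟨hf, hmin⟩
    have hex : ∀ n, f n ≠ ⊥ → ∃ c, c < f n ∧ c ≠ ⊥ := by
      intro n hn
      by_contra h
      push_neg at h
      exact hatomless (f n) ⟨hn, h⟩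
    set g : ℕ → B := fun n => if h : f n ≠ ⊥ then (hex n h).choose else ⊥ with hg
    have hglt : ∀ n, f n ≠ ⊥ → g n < f n ∧ g n ≠ ⊥ := by
      intro n hn
      simp only [hg, dif_pos hn]
      exact (hex n hn).choose_spec
    have h1 : {n | g n \ f n ≠ ⊥} ∈ J := by
      apply hdown _ _ _ (hfin ∅ Set.finite_empty)
      intro n hn
      exfalso; apply hn
      rw [sdiff_eq_bot_iff]
      by_cases hnf : f n ≠ ⊥
      · exact (hglt n hnf).1.le
      · push_neg at hnf; simp [hg, hnf]
    rcases hmin g h1 with h | h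
    · apply hf
      apply hdown _ _ _ h
      intro n hn
      exact (hglt n hn).2
    · apply hf
      apply hdown _ _ _ h
      intro n hn hfb
      exact absurd (sdiff_eq_bot_iff.1 hfb) (not_le_of_gt (hglt n hn).1)
end

section
/- Let I be a meager ideal on ω and define Ĩ = {A ⊆ ω : the restriction I↾A = {X ∈ I : X ⊆ A} is not meager in 2^A}. Then Ĩ is an ideal extending I, Ĩ is itself meager, and Ĩ is hereditarily meager: for every A ∉ Ĩ, the restriction Ĩ↾A is meager in 2^A. -/
open Classical in
/-- The characteristic function of `X`, restricted to `A`, as a point of `2^A`. -/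
noncomputable def chiA (A : Set ℕ) (X : Set ℕ) : ↥A → Bool := fun i => decide ((i : ℕ) ∈ X)

/-- A family `S` of subsets of ω is meager in `2^A`. -/
def MeagerIn (A : Set ℕ) (S : Set (Set ℕ)) : Prop := IsMeagre (chiA A '' S)

/-- The restriction `I↾A = {X ∈ I : X ⊆ A}`. -/
def restr (I : Set (Set ℕ)) (A : Set ℕ) : Set (Set ℕ) := {X ∈ I | X ⊆ A}

/-- `Ĩ = {A : I↾A is not meager in 2^A}`. -/
def tildeM (I : Set (Set ℕ)) : Set (Set ℕ) := {A | ¬ MeagerIn A (restr I A)}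

/-!
Talagrand's characterization: a family `S ⊆ 2^A` closed under subsets is
meager iff there are pairwise disjoint finite blocks `Q k ⊆ A` such that each member of `S`
includes only finitely many of them. For the harder direction, cover `S` by the complement of
an antitone sequence of dense open sets `U k` and choose finite sets `E k` increasing so fast
that every pattern on `E k` extends on `E (k + 1)` into `U k`; if some `x ∈ S` were true on
infinitely many blocks `E (k + 1) \ E k`, then shrinking `x` on these blocks gives a point of
`S` in every `U k`.

With blocks in hand, everything about `Ĩ` is combinatorics. A block sequence for `I↾X` is one
for `I↾Y` whenever `X ⊆ Y`, so `Ĩ` is closed under subsets. A block sequence `P` for `I↾A`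
(`A ∉ Ĩ`) is one for `Ĩ↾A`: if `B ∈ Ĩ↾A` included infinitely many `P k`, those blocks would make
`I↾B` meager. This gives hereditary meagerness, and `Ĩ` itself is meager by taking `A = ω`.
-/

open Set Function

theorem IsMeagre.exists_antitone_isOpen_dense {X : Type*} [TopologicalSpace X] {s : Set X}
    (hs : IsMeagre s) :
    ∃ U : ℕ → Set X, Antitone U ∧ (∀ n, IsOpen (U n)) ∧ (∀ n, Dense (U n)) ∧
      ⋂ n, U n ⊆ sᶜ := by
  obtain ⟨𝒰, h𝒰o, h𝒰d, h𝒰c, h𝒰s⟩ := mem_residual_iff.mp hs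
  obtain ⟨f, hf⟩ := (h𝒰c.insert univ).exists_eq_range (insert_nonempty _ _)
  have hf𝒰 : ∀ n, f n = univ ∨ f n ∈ 𝒰 := fun n => by
    rw [← mem_insert_iff, hf]
    exact mem_range_self n
  have hfo : ∀ n, IsOpen (f n) := fun n => (hf𝒰 n).elim (fun h => h ▸ isOpen_univ) (h𝒰o _)
  have hfd : ∀ n, Dense (f n) := fun n => (hf𝒰 n).elim (fun h => h ▸ dense_univ) (h𝒰d _)
  have hfin : ∀ n, (f '' Iic n).Finite := fun n => (finite_Iic n).image f
  refine ⟨fun n => ⋂₀ (f '' Iic n),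
    fun m n hmn => sInter_subset_sInter (image_mono (Iic_subset_Iic.mpr hmn)),
    fun n => (hfin n).isOpen_sInter (forall_mem_image.mpr fun m _ => hfo m),
    fun n => (hfin n).dense_sInter (forall_mem_image.mpr fun m _ => hfo m)
      (forall_mem_image.mpr fun m _ => hfd m), ?_⟩
  refine Subset.trans (fun x hx => mem_sInter.mpr fun t ht => ?_) h𝒰s
  obtain ⟨n, rfl⟩ : t ∈ range f := hf ▸ mem_insert_of_mem univ ht
  exact mem_iInter.mp hx n _ (mem_image_of_mem f self_mem_Iic)

theorem exists_eqOn_of_eqOn_succ {ι α : Type*} {E : ℕ → Set ι} (hE : Monotone E)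
    {y : ℕ → ι → α} (hy : ∀ k, EqOn (y (k + 1)) (y k) (E k)) :
    ∃ z : ι → α, (∀ k, EqOn z (y k) (E k)) ∧ ∀ i, ∃ k, z i = y k i := by
  have hstable : ∀ k l, k ≤ l → EqOn (y l) (y k) (E k) := by
    intro k l hkl
    induction l, hkl using Nat.le_induction with
    | base => exact eqOn_refl _ _
    | succ l hkl ih => exact ((hy l).mono (hE hkl)).trans ih
  refine ⟨fun i => y (sInf {k | i ∈ E k}) i, fun k i hi => ?_, fun i => ⟨_, rfl⟩⟩
  exact (hstable _ k (Nat.sInf_le hi) (Nat.sInf_mem (s := {k | i ∈ E k}) ⟨k, hi⟩)).symm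

section Cylinders

variable {ι β : Type*} [TopologicalSpace β]

theorem exists_finset_eqOn_imp_mem {U : Set (ι → β)} (hU : IsOpen U) {x : ι → β}
    (hx : x ∈ U) :
    ∃ D : Finset ι, ∀ y, EqOn y x D → y ∈ U := by
  obtain ⟨D, u, hu, hDU⟩ := isOpen_pi_iff.mp hU x hx
  exact ⟨D, fun y hy => hDU fun i hi => (hy hi).symm ▸ (hu i hi).2⟩

theorem isOpen_setOf_eqOn [DiscreteTopology β] {D : Set ι} (hD : D.Finite) (σ : ι → β) :
    IsOpen {x : ι → β | EqOn x σ D} :=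
  isOpen_set_pi (s := fun i => {σ i}) hD fun _ _ => isOpen_discrete _

theorem exists_finset_forall_exists_eqOn [Finite β] [DiscreteTopology β] {U : Set (ι → β)}
    (hU : IsOpen U) (hd : Dense U) (E : Finset ι) :
    ∃ E' : Finset ι, E ⊆ E' ∧ ∀ σ : ι → β, ∃ τ, EqOn τ σ E ∧ ∀ x, EqOn x τ E' → x ∈ U := by
  classical
  have key : ∀ σ : ι → β, ∃ τ, EqOn τ σ E ∧ ∃ D : Finset ι, ∀ x, EqOn x τ D → x ∈ U := by
    intro σ
    obtain ⟨τ, hτσ, hτU⟩ := hd.inter_open_nonempty _ (isOpen_setOf_eqOn E.finite_toSet σ)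
      ⟨σ, eqOn_refl _ _⟩
    exact ⟨τ, hτσ, exists_finset_eqOn_imp_mem hU hτU⟩
  choose τ hτσ D hD using key
  -- `τ σ` may depend on all of `σ`; only the finitely many patterns `σ ↾ E` matter.
  let r : (ι → β) → (E → β) := fun σ i => σ i
  let rep : (ι → β) → ι → β := fun σ => rangeSplitting r ⟨r σ, mem_range_self σ⟩
  have hrep : ∀ σ, EqOn (rep σ) σ E := fun σ i hi =>
    congrFun (apply_rangeSplitting r ⟨r σ, mem_range_self σ⟩) ⟨i, hi⟩
  obtain ⟨B, hB⟩ : BddAbove (range fun σ => D (rep σ)) :=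
    ((finite_range fun p : range r => D (rangeSplitting r p)).subset
      (by rintro _ ⟨σ, rfl⟩; exact ⟨_, rfl⟩)).bddAbove
  refine ⟨E ∪ B, Finset.subset_union_left, fun σ => ⟨τ (rep σ), (hτσ _).trans (hrep σ),
    fun x hx => hD _ x (hx.mono ?_)⟩⟩
  exact Finset.coe_subset.mpr ((hB (mem_range_self σ)).trans Finset.subset_union_right)

end Cylinders

section Bool

variable {ι : Type*}

theorem isMeagre_setOf_finite_blocks {K : Set ℕ} (hK : K.Infinite) {Q : ℕ → Set ι}
    (hQ : ∀ k ∈ K, (Q k).Finite) (hdisj : K.PairwiseDisjoint Q) :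
    IsMeagre {x : ι → Bool | {k ∈ K | ∀ i ∈ Q k, x i = true}.Finite} := by
  let G : ℕ → Set (ι → Bool) := fun n =>
    ⋃ k ∈ K, ⋃ (_ : n < k), {x | EqOn x (fun _ => true) (Q k)}
  have hGo : ∀ n, IsOpen (G n) := fun n =>
    isOpen_biUnion fun k hk => isOpen_iUnion fun _ => isOpen_setOf_eqOn (hQ k hk) _
  have hGd : ∀ n, Dense (G n) := by
    intro n
    refine dense_iff_inter_open.mpr fun U hU ⟨x, hx⟩ => ?_
    obtain ⟨D, hD⟩ := exists_finset_eqOn_imp_mem hU hx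
    have hmeet : {k ∈ K | ¬ Disjoint (Q k) D}.Finite := by
      refine (D.finite_toSet.biUnion fun i _ =>
        (?_ : {k ∈ K | i ∈ Q k}.Subsingleton).finite).subset ?_
      · exact fun k hk l hl => hdisj.elim_set hk.1 hl.1 i hk.2 hl.2
      · rintro k ⟨hk, hkD⟩
        obtain ⟨i, hiQ, hiD⟩ := not_disjoint_iff.mp hkD
        exact mem_biUnion hiD ⟨hk, hiQ⟩
    obtain ⟨k, ⟨hk, hkD⟩, hnk⟩ := (hK.sdiff hmeet).exists_gt n
    classical
    refine ⟨fun i => if i ∈ D then x i else true, hD _ fun i hi => if_pos hi, ?_⟩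
    refine mem_biUnion hk (mem_iUnion.mpr ⟨hnk, fun i hi => if_neg fun hiD => hkD ⟨hk, ?_⟩⟩)
    exact not_disjoint_iff.mpr ⟨i, hi, hiD⟩
  refine Filter.mem_of_superset (countable_iInter_mem.mpr fun n =>
    residual_of_dense_open (hGo n) (hGd n)) fun x hx hfin => ?_
  obtain ⟨n, hn⟩ := hfin.bddAbove
  obtain ⟨k, hnk, hk, hxk⟩ : ∃ k, n < k ∧ k ∈ K ∧ EqOn x (fun _ => true) (Q k) := by
    simpa [G] using mem_iInter.mp hx n
  exact (hn ⟨hk, hxk⟩).not_gt hnk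

theorem exists_disjoint_blocks_of_isMeagre {S : Set (ι → Bool)} (hS : IsMeagre S)
    (hlow : IsLowerSet S) :
    ∃ Q : ℕ → Finset ι, Pairwise (Disjoint on Q) ∧
      ∀ x ∈ S, {k | ∀ i ∈ Q k, x i = true}.Finite := by
  classical
  obtain ⟨U, hUanti, hUo, hUd, hUS⟩ := hS.exists_antitone_isOpen_dense
  choose next hnext g hgE hgU using fun k => exists_finset_forall_exists_eqOn (hUo k) (hUd k)
  obtain ⟨E, hEsucc⟩ : ∃ E : ℕ → Finset ι, ∀ k, E (k + 1) = next k (E k) :=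
    ⟨fun n => Nat.rec ∅ (fun k Ek => next k Ek) n, fun _ => rfl⟩
  have hE : Monotone E := monotone_nat_of_le_succ fun k => hEsucc k ▸ hnext k (E k)
  refine ⟨fun k => E (k + 1) \ E k, (pairwise_disjoint_on _).mpr fun k l hkl => ?_,
    fun x hx => ?_⟩
  · exact Finset.disjoint_of_subset_left (Finset.sdiff_subset.trans (hE hkl))
      Finset.disjoint_sdiff
  by_contra hK
  -- Shrink `x` block by block towards the witnesses `g k`: on a block where `x` is everywhere
  -- true, `y (k + 1)` agrees with `g k (E k) (y k)` on all of `E (k + 1)`.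
  let y : ℕ → ι → Bool := fun n => Nat.rec x (fun k yk => g k (E k) yk ⊓ x) n
  have hyx : ∀ k, y k ≤ x := by
    rintro (_ | k)
    exacts [le_rfl, inf_le_right]
  have hy : ∀ k, EqOn (y (k + 1)) (y k) (E k) := by
    intro k i hi
    exact (congrArg (· ⊓ x i) (hgE k (E k) (y k) hi)).trans (inf_eq_left.mpr (hyx k i))
  obtain ⟨z, hzy, hzx⟩ := exists_eqOn_of_eqOn_succ (E := fun k => (E k : Set ι))
    (fun _ _ h => Finset.coe_subset.mpr (hE h)) hy
  have hzS : z ∈ S := hlow (fun i => (hzx i).elim fun k hk => hk ▸ hyx k i) hx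
  have hzU : ∀ k ∈ {k | ∀ i ∈ E (k + 1) \ E k, x i = true}, z ∈ U k := by
    intro k hk
    refine hgU k (E k) (y k) z fun i hi => ?_
    rw [← hEsucc] at hi
    refine (hzy (k + 1) hi).trans ?_
    by_cases hiE : i ∈ E k
    · exact (hy k hiE).trans (hgE k (E k) (y k) hiE).symm
    · exact inf_eq_left.mpr ((hk i (Finset.mem_sdiff.mpr ⟨hi, hiE⟩)).symm ▸ le_top)
  refine hUS (mem_iInter.mpr fun n => ?_) hzS
  obtain ⟨k, hk, hnk⟩ := (not_finite.mp hK).exists_gt n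
  exact hUanti hnk.le (hzU k hk)

end Bool

section Talagrand

variable {A : Set ℕ}

theorem chiA_eq_true_iff {X : Set ℕ} {i : A} : chiA A X i = true ↔ (i : ℕ) ∈ X := by
  simp [chiA]

theorem chiA_val_image (y : A → Bool) : chiA A (Subtype.val '' {i | y i = true}) = y :=
  funext fun _ => Bool.eq_iff_iff.mpr <|
    chiA_eq_true_iff.trans Subtype.val_injective.mem_set_image

theorem image_chiA_restr_of_mem {I : Set (Set ℕ)} (hI : IsLowerSet I) (hA : A ∈ I) :
    chiA A '' restr I A = univ :=
  eq_univ_of_forall fun y =>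
    ⟨_, ⟨hI (Subtype.coe_image_subset _ _) hA, Subtype.coe_image_subset _ _⟩, chiA_val_image y⟩

theorem isLowerSet_image_chiA_restr {I : Set (Set ℕ)} (hI : IsLowerSet I) :
    IsLowerSet (chiA A '' restr I A) := by
  rintro _ y hy ⟨Z, ⟨hZI, -⟩, rfl⟩
  refine ⟨_, ⟨hI ?_ hZI, Subtype.coe_image_subset _ _⟩, chiA_val_image y⟩
  rintro _ ⟨i, hi, rfl⟩
  exact chiA_eq_true_iff.mp (Bool.le_iff_imp.mp (hy i) hi)

theorem meagerIn_of_disjoint_blocks {S : Set (Set ℕ)} {K : Set ℕ} (hK : K.Infinite)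
    {Q : ℕ → Set ℕ} (hQA : ∀ k, Q k ⊆ A) (hQ : ∀ k, (Q k).Finite)
    (hdisj : K.PairwiseDisjoint Q) (hS : ∀ Z ∈ S, {k ∈ K | Q k ⊆ Z}.Finite) :
    MeagerIn A S := by
  refine (isMeagre_setOf_finite_blocks hK (Q := fun k => Subtype.val ⁻¹' Q k)
    (fun k _ => (hQ k).preimage Subtype.val_injective.injOn)
    fun k hk l hl hkl => (hdisj hk hl hkl).preimage _).mono ?_
  rintro _ ⟨Z, hZ, rfl⟩
  exact (hS Z hZ).subset fun k ⟨hk, hkZ⟩ =>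
    ⟨hk, fun a ha => chiA_eq_true_iff.mp (hkZ (i := ⟨a, hQA k ha⟩) ha)⟩

theorem exists_infinite_blocks_subset_of_not_meagerIn {S : Set (Set ℕ)}
    (h : ¬ MeagerIn A S) {K : Set ℕ} (hK : K.Infinite) {Q : ℕ → Set ℕ} (hQA : ∀ k, Q k ⊆ A)
    (hQ : ∀ k, (Q k).Finite) (hdisj : K.PairwiseDisjoint Q) :
    ∃ Z ∈ S, {k ∈ K | Q k ⊆ Z}.Infinite := by
  by_contra! h'
  exact h (meagerIn_of_disjoint_blocks hK hQA hQ hdisj h')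

theorem exists_disjoint_blocks_of_meagerIn {I : Set (Set ℕ)} (hI : IsLowerSet I)
    (h : MeagerIn A (restr I A)) :
    ∃ Q : ℕ → Set ℕ, (∀ k, Q k ⊆ A) ∧ (∀ k, (Q k).Finite) ∧ Pairwise (Disjoint on Q) ∧
      ∀ Z ∈ restr I A, {k | Q k ⊆ Z}.Finite := by
  obtain ⟨Q, hdisj, hfin⟩ :=
    exists_disjoint_blocks_of_isMeagre h (isLowerSet_image_chiA_restr hI)
  refine ⟨fun k => Subtype.val '' (Q k : Set A), fun k => Subtype.coe_image_subset _ _,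
    fun k => (Q k).finite_toSet.image _, fun k l hkl => ?_, fun Z hZ => ?_⟩
  · exact (disjoint_image_iff Subtype.val_injective).mpr (Finset.disjoint_coe.mpr (hdisj hkl))
  · exact (hfin _ (mem_image_of_mem _ hZ)).subset fun k hk i hi =>
      chiA_eq_true_iff.mpr (hk (mem_image_of_mem _ hi))

end Talagrand

section Tilde

variable {I : Set (Set ℕ)}

theorem mem_tildeM_of_mem (hI : IsLowerSet I) {X : Set ℕ} (hX : X ∈ I) : X ∈ tildeM I := by
  show ¬ IsMeagre (chiA X '' restr I X)
  rw [image_chiA_restr_of_mem hI hX]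
  exact not_isMeagre_of_isOpen isOpen_univ univ_nonempty

theorem isLowerSet_tildeM (hI : IsLowerSet I) : IsLowerSet (tildeM I) := by
  intro Y X hXY hY hX
  obtain ⟨Q, hQX, hQ, hdisj, hfin⟩ := exists_disjoint_blocks_of_meagerIn hI hX
  refine hY (meagerIn_of_disjoint_blocks infinite_univ (fun k => (hQX k).trans hXY) hQ
    (hdisj.set_pairwise univ) fun Z hZ => ?_)
  refine (hfin (Z ∩ X) ⟨hI inter_subset_left hZ.1, inter_subset_right⟩).subset ?_
  exact fun k hk => subset_inter hk.2 (hQX k)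

theorem union_mem_tildeM (hI : IsLowerSet I) (hIu : ∀ X ∈ I, ∀ Y ∈ I, X ∪ Y ∈ I)
    {X Y : Set ℕ} (hX : X ∈ tildeM I) (hY : Y ∈ tildeM I) : X ∪ Y ∈ tildeM I := by
  intro hXY
  obtain ⟨P, hPXY, hP, hdisj, hfin⟩ := exists_disjoint_blocks_of_meagerIn hI hXY
  -- Some `Z₁ ∈ I↾X` catches infinitely many traces `P k ∩ X`, and then some `Z₂ ∈ I↾(Y \ X)`
  -- catches infinitely many of the corresponding `P k \ X`; so `Z₁ ∪ Z₂` includes infinitely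
  -- many `P k`.
  obtain ⟨Z₁, hZ₁, hK₁⟩ := exists_infinite_blocks_subset_of_not_meagerIn hX infinite_univ
    (Q := fun k => P k ∩ X) (fun _ => inter_subset_right) (fun k => (hP k).inter_of_left X)
    fun k _ l _ hkl => (hdisj hkl).mono inter_subset_left inter_subset_left
  obtain ⟨Z₂, hZ₂, hK₂⟩ := exists_infinite_blocks_subset_of_not_meagerIn
    (isLowerSet_tildeM hI sdiff_subset hY) hK₁ (Q := fun k => P k \ X)
    (fun k _ ha => ⟨(hPXY k ha.1).resolve_left ha.2, ha.2⟩) (fun k => (hP k).sdiff)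
    fun k _ l _ hkl => (hdisj hkl).mono sdiff_subset sdiff_subset
  have hZ : Z₁ ∪ Z₂ ∈ restr I (X ∪ Y) :=
    ⟨hIu _ hZ₁.1 _ hZ₂.1, union_subset_union hZ₁.2 (hZ₂.2.trans sdiff_subset)⟩
  refine (hfin _ hZ).not_infinite (hK₂.mono ?_)
  rintro k ⟨⟨-, hk₁⟩, hk₂⟩
  exact (inter_union_sdiff (P k) X).symm.subset.trans (union_subset_union hk₁ hk₂)

theorem meagerIn_restr_tildeM (hI : IsLowerSet I) {A : Set ℕ} (hA : A ∉ tildeM I) :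
    MeagerIn A (restr (tildeM I) A) := by
  obtain ⟨P, hPA, hP, hdisj, hfin⟩ := exists_disjoint_blocks_of_meagerIn hI (not_not.mp hA)
  refine meagerIn_of_disjoint_blocks infinite_univ hPA hP (hdisj.set_pairwise univ)
    fun B hB => not_infinite.mp fun hK => ?_
  obtain ⟨Z, hZ, hKZ⟩ := exists_infinite_blocks_subset_of_not_meagerIn hB.1 hK
    (Q := fun k => P k ∩ B) (fun _ => inter_subset_right) (fun k => (hP k).inter_of_left B)
    fun k _ l _ hkl => (hdisj hkl).mono inter_subset_left inter_subset_left
  refine (hfin Z ⟨hZ.1, hZ.2.trans hB.2⟩).not_infinite (hKZ.mono ?_)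
  rintro k ⟨⟨-, hkB⟩, hkZ⟩
  exact (subset_inter subset_rfl hkB).trans hkZ

end Tilde

/-- For a meager ideal `I`, the family `Ĩ = {A : I↾A not meager}` is an ideal extending
`I`, it is meager, and it is hereditarily meager. -/
theorem tilde_of_meager_ideal (I : Set (Set ℕ)) (hI : IsIdeal I)
    (hm : MeagerIn Set.univ I) :
    IsIdeal (tildeM I) ∧ I ⊆ tildeM I ∧ MeagerIn Set.univ (tildeM I) ∧
    ∀ A : Set ℕ, A ∉ tildeM I → MeagerIn A (restr (tildeM I) A) := by
  obtain ⟨hfin, hlow, hunion⟩ := hI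
  replace hlow : IsLowerSet I := fun _ _ h hY => hlow _ _ h hY
  have hsub : I ⊆ tildeM I := fun _ => mem_tildeM_of_mem hlow
  have hrestr : ∀ J : Set (Set ℕ), restr J univ = J := fun J => sep_eq_self_iff_mem_true.mpr
    fun _ _ => subset_univ _
  refine ⟨⟨fun X hX => hsub (hfin X hX), fun X Y hXY hY => isLowerSet_tildeM hlow hXY hY,
    fun X Y => union_mem_tildeM hlow fun X hX Y hY => hunion X Y hX hY⟩, hsub, ?_,
    fun A => meagerIn_restr_tildeM hlow⟩
  have huniv : univ ∉ tildeM I := fun h => h (by rwa [hrestr])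
  exact hrestr (tildeM I) ▸ meagerIn_restr_tildeM hlow huniv
end

section
/- For any ideal I on ω, the family Ĩ = {A ⊆ ω : I↾A is not null} is an ideal on ω extending I, where I↾A = {X ∈ I : X ⊆ A} and 'null' refers to the Haar/coin-flipping product measure on 2^A. In particular Ĩ is downward closed and closed under finite unions (the latter via Fubini: if I↾A and I↾B are non-null for disjoint A, B, then I↾(A∪B) is non-null). -/
noncomputable section
open MeasureTheory

instance : TopologicalSpace (Multiplicative (ZMod 2)) := ⊥
instance : DiscreteTopology (Multiplicative (ZMod 2)) := ⟨rfl⟩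
instance : IsTopologicalGroup (Multiplicative (ZMod 2)) := by
  constructor <;> exact continuous_of_discreteTopology
instance cantorMS (ι : Type) : MeasurableSpace (ι → Multiplicative (ZMod 2)) := borel _
instance (ι : Type) : BorelSpace (ι → Multiplicative (ZMod 2)) := ⟨rfl⟩

/-- The Haar ("coin-flipping") measure on the generalized Cantor space `2^ι`. -/
def coinMeasure (ι : Type) : Measure (ι → Multiplicative (ZMod 2)) :=
  Measure.haarMeasure ⟨⟨Set.univ, isCompact_univ⟩, by
    rw [interior_univ]; exact Set.univ_nonempty⟩

open Classical in
/-- The characteristic function of `X`, restricted to `A`, as a point of `2^A`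
(with values in the two-element group). -/
def chiG (A : Set ℕ) (X : Set ℕ) : ↥A → Multiplicative (ZMod 2) :=
  fun i => if (i : ℕ) ∈ X then Multiplicative.ofAdd 1 else Multiplicative.ofAdd 0

/-- A family `S` of subsets of ω is null in `2^A` (w.r.t. the coin-flipping measure). -/
def NullIn (A : Set ℕ) (S : Set (Set ℕ)) : Prop := coinMeasure ↥A (chiG A '' S) = 0

end

/-- `Ĩ = {A : I↾A is not null in 2^A}`. -/
def tildeN (I : Set (Set ℕ)) : Set (Set ℕ) := {A | ¬ NullIn A (restr I A)}

open MeasureTheory Set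

local notation "𝟚" => Multiplicative (ZMod 2)

instance (ι : Type) : IsProbabilityMeasure (coinMeasure ι) := ⟨Measure.haarMeasure_self⟩

instance (ι : Type) : (coinMeasure ι).IsHaarMeasure := Measure.isHaarMeasure_haarMeasure _

section UnionRestrict

variable {α M : Type*} [Monoid M] (A B : Set α)

def unionRestrictHom : (↥(A ∪ B) → M) →* (↥A → M) × (↥B → M) where
  toFun f := (f ∘ inclusion subset_union_left, f ∘ inclusion subset_union_right)
  map_one' := rfl
  map_mul' _ _ := rfl

theorem continuous_unionRestrictHom [TopologicalSpace M] :
    Continuous (unionRestrictHom (M := M) A B) :=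
  (Pi.continuous_precomp' _).prodMk (Pi.continuous_precomp' _)

theorem unionRestrictHom_injective : Function.Injective (unionRestrictHom (M := M) A B) := by
  intro f g hfg
  funext ⟨i, hi⟩
  rcases hi with hA | hB
  · exact congr_fun (congr_arg Prod.fst hfg) ⟨i, hA⟩
  · exact congr_fun (congr_arg Prod.snd hfg) ⟨i, hB⟩

theorem unionRestrictHom_surjective {A B : Set α} (hd : Disjoint A B) :
    Function.Surjective (unionRestrictHom (M := M) A B) := by
  classical
  intro p
  refine ⟨fun i => if h : i.1 ∈ A then p.1 ⟨i, h⟩ else p.2 ⟨i, i.2.resolve_left h⟩, ?_⟩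
  refine Prod.ext (funext fun a => dif_pos a.2) (funext fun b => ?_)
  exact dif_neg (disjoint_right.mp hd b.2)

end UnionRestrict

theorem coinMeasure_preimage_unionRestrictHom {A B : Set ℕ} (hd : Disjoint A B)
    (s : Set (↥A → 𝟚)) (t : Set (↥B → 𝟚)) :
    coinMeasure ↥(A ∪ B) (unionRestrictHom A B ⁻¹' s ×ˢ t) =
      coinMeasure ↥A s * coinMeasure ↥B t := by
  have hcont := continuous_unionRestrictHom (M := 𝟚) A B
  have hmp : MeasurePreserving (unionRestrictHom A B) (coinMeasure ↥(A ∪ B))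
      ((coinMeasure ↥A).prod (coinMeasure ↥B)) :=
    MonoidHom.measurePreserving hcont (unionRestrictHom_surjective hd) (by simp)
  rw [hmp.measure_preimage_emb
    (hcont.isClosedEmbedding (unionRestrictHom_injective A B)).measurableEmbedding,
    Measure.prod_prod]

theorem unionRestrictHom_chiG (A B Z : Set ℕ) :
    unionRestrictHom A B (chiG (A ∪ B) Z) = (chiG A Z, chiG B Z) := rfl

theorem chiG_eq_chiG_of_inter_eq {A X Y : Set ℕ} (h : X ∩ A = Y ∩ A) : chiG A X = chiG A Y := by
  funext i
  have hiff : (i : ℕ) ∈ X ↔ (i : ℕ) ∈ Y := by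
    simpa [i.2] using Set.ext_iff.mp h i
  unfold chiG
  split_ifs <;> tauto

theorem exists_subset_chiG_eq {A : Set ℕ} (f : ↥A → 𝟚) : ∃ X ⊆ A, chiG A X = f := by
  refine ⟨{n | ∃ h : n ∈ A, f ⟨n, h⟩ = Multiplicative.ofAdd 1}, fun n hn => hn.1, ?_⟩
  funext i
  have two_valued : ∀ g : 𝟚, g ≠ Multiplicative.ofAdd 1 → g = Multiplicative.ofAdd 0 := by
    decide
  by_cases hi : f i = Multiplicative.ofAdd 1
  · simp [chiG, hi]
  · simp [chiG, hi, (two_valued _ hi).symm]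

namespace NullIn

variable {A B : Set ℕ} {S T U : Set (Set ℕ)}

theorem union_of_inter_mem (hd : Disjoint A B) (hT : NullIn A T) (hST : ∀ Z ∈ S, Z ∩ A ∈ T) :
    NullIn (A ∪ B) S := by
  have hsub : chiG (A ∪ B) '' S ⊆ unionRestrictHom A B ⁻¹' (chiG A '' T) ×ˢ univ := by
    rintro _ ⟨Z, hZ, rfl⟩
    refine ⟨⟨Z ∩ A, hST Z hZ, chiG_eq_chiG_of_inter_eq ?_⟩, mem_univ _⟩
    rw [inter_assoc, inter_self]
  refine measure_mono_null hsub ?_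
  rw [coinMeasure_preimage_unionRestrictHom hd]
  exact mul_eq_zero_of_left hT _

theorem or_of_union_mem (hd : Disjoint A B) (hS : NullIn (A ∪ B) S)
    (hTA : ∀ Z ∈ T, Z ⊆ A) (hUB : ∀ W ∈ U, W ⊆ B) (hTU : ∀ Z ∈ T, ∀ W ∈ U, Z ∪ W ∈ S) :
    NullIn A T ∨ NullIn B U := by
  have hsub : unionRestrictHom A B ⁻¹' (chiG A '' T) ×ˢ (chiG B '' U) ⊆ chiG (A ∪ B) '' S := by
    rintro f ⟨⟨Z, hZ, hfA⟩, ⟨W, hW, hfB⟩⟩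
    refine ⟨Z ∪ W, hTU Z hZ W hW, unionRestrictHom_injective A B ?_⟩
    rw [unionRestrictHom_chiG, Prod.ext_iff, ← hfA, ← hfB]
    constructor <;> apply chiG_eq_chiG_of_inter_eq
    · rw [union_inter_distrib_right, (hd.mono_right (hUB W hW)).symm.inter_eq, union_empty]
    · rw [union_inter_distrib_right, (hd.mono_left (hTA Z hZ)).inter_eq, empty_union]
  have hprod := measure_mono_null hsub hS
  rwa [coinMeasure_preimage_unionRestrictHom hd, mul_eq_zero] at hprod

end NullIn

section Tilde

variable {I : Set (Set ℕ)}

theorem subset_tildeN (hdown : ∀ X Y : Set ℕ, X ⊆ Y → Y ∈ I → X ∈ I) : I ⊆ tildeN I := by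
  intro A hA hnull
  have himage : chiG A '' restr I A = univ := by
    refine eq_univ_of_forall fun f => ?_
    obtain ⟨X, hXA, rfl⟩ := exists_subset_chiG_eq f
    exact ⟨X, ⟨hdown X A hXA hA, hXA⟩, rfl⟩
  have : coinMeasure ↥A univ = 0 := himage ▸ hnull
  simp at this

theorem tildeN_mono (hdown : ∀ X Y : Set ℕ, X ⊆ Y → Y ∈ I → X ∈ I) {X Y : Set ℕ} (hXY : X ⊆ Y)
    (hY : Y ∈ tildeN I) : X ∈ tildeN I := by
  intro hX
  apply hY
  rw [← union_sdiff_cancel hXY]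
  exact hX.union_of_inter_mem disjoint_sdiff_right
    fun Z hZ => ⟨hdown _ _ inter_subset_left hZ.1, inter_subset_right⟩

theorem union_mem_tildeN (hunion : ∀ X Y : Set ℕ, X ∈ I → Y ∈ I → X ∪ Y ∈ I) {A B : Set ℕ}
    (hd : Disjoint A B) (hA : A ∈ tildeN I) (hB : B ∈ tildeN I) : A ∪ B ∈ tildeN I := fun hS =>
  (hS.or_of_union_mem hd (fun _ hZ => hZ.2) (fun _ hW => hW.2)
    fun Z hZ W hW => ⟨hunion Z W hZ.1 hW.1, union_subset_union hZ.2 hW.2⟩).elim hA hB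

end Tilde

/-- For any ideal `I` on ω, the family `Ĩ = {A : I↾A not null}` is an ideal extending
`I`; in particular it is downward closed and closed under finite unions. -/
theorem tilde_null_is_ideal (I : Set (Set ℕ)) (hI : IsIdeal I) :
    IsIdeal (tildeN I) ∧ I ⊆ tildeN I := by
  obtain ⟨hfin, hdown, hunion⟩ := hI
  have hsub := subset_tildeN hdown
  refine ⟨⟨fun X hX => hsub (hfin X hX), fun X Y hXY => tildeN_mono hdown hXY, ?_⟩, hsub⟩
  intro X Y hX hY
  rw [← union_sdiff_self]
  exact union_mem_tildeN hunion disjoint_sdiff_right hX (tildeN_mono hdown sdiff_subset hY)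
end
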